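/- Define δ₂(u,c,p,m) := (1-p)(1 - c^{2m-1})u² + 2c(1 - c^{2m-2})u + 2pc(1 - c^{2m-1}) + c²(1 - c^{2m-3}). Then δ₂(u,c,p,m) ≥ 0 for all u ∈ [-c, 0], c ∈ (0,1), m ≥ 1, and p ∈ [p_*(m), 1), where p_*(m) := (2m+1 - √(4(m-1)(m+2)+1))/(4(2m-1)). -/

import Mathlib

/-!
Write `c = s²` and `k = 2m - 1`, so that `c^(2m-1) = t²` with `t = s^k`. On `[-c, 0]`, `δ₂` is
nondecreasing in `p` (its `p`-coefficient is `(1 - t²)(2c - u²)`), so it suffices to treat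
`p₀ = p_*(m)`. Writing `δ₂ = A u² + 2 B u + C` at `p₀`, one has
`A C - B² = -Q + p₀ (1 - s²)(1 - t²)(s - t)²`, where `Q = 2p₀²S² - p₀S(S + 2T) + T²` with
`S = (1 - t²) s` and `T = (1 - s²) t`. The inequality `k sinh a ≤ sinh (k a)` gives `S ≥ k T`,
and since `p₀ ≤ 1/2` the form `Q` only decreases as `S` grows, so
`Q ≤ T² (2k²p₀² - k(k+2)p₀ + 1) = 0` because `p₀` is a root of that polynomial.
-/

open Real

theorem mul_sinh_le_sinh_mul {k a : ℝ} (hk : 1 ≤ k) (ha : 0 ≤ a) :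
    k * sinh a ≤ sinh (k * a) := by
  have hmono : MonotoneOn (fun x => sinh (k * x) - k * sinh x) (Set.Ici 0) := by
    have hderiv (x : ℝ) : HasDerivAt (fun x => sinh (k * x) - k * sinh x)
        (k * (cosh (k * x) - cosh x)) x := by
      have h := (((hasDerivAt_id x).const_mul k).sinh).sub ((hasDerivAt_sinh x).const_mul k)
      exact h.congr_deriv (by simp only [id, mul_one]; ring)
    refine monotoneOn_of_hasDerivWithinAt_nonneg (convex_Ici 0)
      (fun x _ => (hderiv x).continuousAt.continuousWithinAt)
      (fun x _ => (hderiv x).hasDerivWithinAt) fun x hx => ?_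
    rw [interior_Ici, Set.mem_Ioi] at hx
    have : cosh x ≤ cosh (k * x) := by
      rw [cosh_le_cosh, abs_of_pos hx, abs_of_pos (by positivity)]
      nlinarith
    nlinarith
  simpa using hmono Set.self_mem_Ici (Set.mem_Ici.2 ha) ha

theorem mul_one_sub_sq_mul_rpow_le {s k : ℝ} (hs0 : 0 < s) (hs1 : s ≤ 1) (hk : 1 ≤ k) :
    k * ((1 - s ^ 2) * s ^ k) ≤ (1 - (s ^ k) ^ 2) * s := by
  obtain ⟨a, ha, rfl⟩ : ∃ a, 0 ≤ a ∧ s = exp (-a) :=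
    ⟨-log s, by linarith [log_nonpos hs0.le hs1], by rw [neg_neg, exp_log hs0]⟩
  have hsinh := mul_sinh_le_sinh_mul hk ha
  rw [← exp_mul, sinh_eq, sinh_eq] at *
  -- both sides carry the factor `exp (-a) * exp (-(k * a))`; what remains is `hsinh`
  have e : ∀ x, 1 - exp (-x) ^ 2 = exp (-x) * (exp x - exp (-x)) := fun x => by
    rw [exp_neg]; field_simp
  rw [e, neg_mul, mul_comm a k, e]
  have : 0 < exp (-a) * exp (-(k * a)) := by positivity
  nlinarith

/-- The paper's `p_*(m)`: with `k = 2m - 1` it is the smaller root of `2k²x² - k(k+2)x + 1`. -/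
noncomputable def pStar (m : ℝ) : ℝ :=
  (2 * m + 1 - √(4 * (m - 1) * (m + 2) + 1)) / (4 * (2 * m - 1))

theorem pStar_isRoot {m : ℝ} (hm : 1 ≤ m) :
    2 * (2 * m - 1) ^ 2 * pStar m ^ 2 - (2 * m - 1) * (2 * m + 1) * pStar m + 1 = 0 := by
  have hr := sq_sqrt (show 0 ≤ 4 * (m - 1) * (m + 2) + 1 by nlinarith)
  have : 2 * m - 1 ≠ 0 := by linarith
  unfold pStar
  field_simp
  linear_combination 2 * hr

theorem pStar_le_half {m : ℝ} (hm : 1 ≤ m) : pStar m ≤ 1 / 2 := by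
  have hr := sq_sqrt (show 0 ≤ 4 * (m - 1) * (m + 2) + 1 by nlinarith)
  have hr0 := sqrt_nonneg (4 * (m - 1) * (m + 2) + 1)
  unfold pStar
  rw [div_le_iff₀ (by linarith)]
  nlinarith

theorem homogeneous_quadratic_le {k S T p : ℝ} (hk : 0 ≤ k) (hT : 0 ≤ T) (hkS : k * T ≤ S)
    (hp0 : 0 ≤ p) (hp : p ≤ 1 / 2) :
    2 * p ^ 2 * S ^ 2 - p * S * (S + 2 * T) + T ^ 2
      ≤ T ^ 2 * (2 * k ^ 2 * p ^ 2 - k * (k + 2) * p + 1) := by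
  have hkT : 0 ≤ k * T := mul_nonneg hk hT
  have : 0 ≤ (S - k * T) * (p * (1 - 2 * p) * (S + k * T) + 2 * p * T) := by
    apply mul_nonneg (by linarith)
    have : 0 ≤ p * (1 - 2 * p) := mul_nonneg hp0 (by linarith)
    exact add_nonneg (mul_nonneg this (by linarith)) (by positivity)
  linarith

theorem quadratic_nonneg_of_sq_le {a b c : ℝ} (ha : 0 < a) (h : b ^ 2 ≤ a * c) (x : ℝ) :
    0 ≤ a * x ^ 2 + 2 * b * x + c := by
  have : 0 ≤ a * (a * x ^ 2 + 2 * b * x + c) := by nlinarith [sq_nonneg (a * x + b)]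
  exact nonneg_of_mul_nonneg_right (by linarith) ha

theorem delta2_poly_nonneg {s t k p₀ p u : ℝ} (hs0 : 0 ≤ s) (hs1 : s ≤ 1) (ht0 : 0 ≤ t)
    (ht1 : t < 1) (hk : 0 ≤ k) (hst : k * ((1 - s ^ 2) * t) ≤ (1 - t ^ 2) * s)
    (hroot : 2 * k ^ 2 * p₀ ^ 2 - k * (k + 2) * p₀ + 1 = 0) (hp₀ : p₀ ≤ 1 / 2) (hp : p₀ ≤ p)
    (hu : u ^ 2 ≤ 2 * s ^ 2) :
    0 ≤ (1 - p) * (1 - t ^ 2) * u ^ 2 + 2 * (s ^ 2 - t ^ 2) * u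
      + (2 * p * s ^ 2 * (1 - t ^ 2) + s ^ 4 - t ^ 2) := by
  have hs2 : 0 ≤ 1 - s ^ 2 := by nlinarith
  have ht2 : 0 < 1 - t ^ 2 := by nlinarith
  have hp₀0 : 0 ≤ p₀ := by nlinarith
  have hQ := homogeneous_quadratic_le hk (mul_nonneg hs2 ht0) hst hp₀0 hp₀
  rw [hroot, mul_zero] at hQ
  have hdisc : (s ^ 2 - t ^ 2) ^ 2
      ≤ (1 - p₀) * (1 - t ^ 2) * (2 * p₀ * s ^ 2 * (1 - t ^ 2) + s ^ 4 - t ^ 2) := by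
    have : 0 ≤ p₀ * (1 - s ^ 2) * (1 - t ^ 2) * (s - t) ^ 2 := by positivity
    linarith
  have hmono : 0 ≤ (p - p₀) * (1 - t ^ 2) * (2 * s ^ 2 - u ^ 2) :=
    mul_nonneg (mul_nonneg (by linarith) ht2.le) (by linarith)
  have := quadratic_nonneg_of_sq_le (mul_pos (by linarith) ht2) hdisc u
  linarith

theorem delta2_nonneg_general (u c p m : ℝ) (hu : u ∈ Set.Icc (-c) 0)
    (hc : c ∈ Set.Ioo (0 : ℝ) 1) (hm : 1 ≤ m)
    (hp : (2 * m + 1 - Real.sqrt (4 * (m - 1) * (m + 2) + 1)) / (4 * (2 * m - 1)) ≤ p) :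
    0 ≤ (1 - p) * (1 - c ^ (2 * m - 1)) * u ^ 2 + 2 * c * (1 - c ^ (2 * m - 2)) * u
        + 2 * p * c * (1 - c ^ (2 * m - 1)) + c ^ 2 * (1 - c ^ (2 * m - 3)) := by
  obtain ⟨hu1, hu2⟩ := hu
  obtain ⟨hc0, hc1⟩ := hc
  obtain ⟨s, hs0, rfl⟩ : ∃ s, 0 < s ∧ c = s ^ 2 := ⟨√c, sqrt_pos.2 hc0, (sq_sqrt hc0.le).symm⟩
  have hs1 : s < 1 := (sq_lt_one_iff₀ hs0.le).1 hc1
  have hpow1 : (s ^ 2) ^ (2 * m - 1) = (s ^ (2 * m - 1)) ^ 2 := (rpow_pow_comm hs0.le _ 2).symm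
  have hpow2 : (s ^ 2) ^ (2 * m - 2) = (s ^ (2 * m - 1)) ^ 2 / s ^ 2 := by
    rw [show 2 * m - 2 = 2 * m - 1 - 1 by ring, rpow_sub_one (by positivity), hpow1]
  have hpow3 : (s ^ 2) ^ (2 * m - 3) = (s ^ (2 * m - 1)) ^ 2 / (s ^ 2) ^ 2 := by
    rw [show 2 * m - 3 = 2 * m - 1 - 2 by ring, rpow_sub (by positivity), hpow1, rpow_two]
  have key := delta2_poly_nonneg (k := 2 * m - 1) (t := s ^ (2 * m - 1)) (u := u)
    hs0.le hs1.le (rpow_nonneg hs0.le _) (rpow_lt_one hs0.le hs1 (by linarith)) (by linarith)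
    (mul_one_sub_sq_mul_rpow_le hs0 hs1.le (by linarith))
    (by linear_combination pStar_isRoot hm) (pStar_le_half hm) hp (by nlinarith)
  rw [hpow1, hpow2, hpow3]
  convert key using 1
  field_simp
  ring

/-- `δ₂(u,c,p,m) ≥ 0` for `u ∈ [-c,0]`, `c ∈ (0,1)`, `m ≥ 1`, `p ∈ [p_*(m), 1)`. -/
theorem delta2_nonneg (u c p m : ℝ) (hu : u ∈ Set.Icc (-c) 0)
    (hc : c ∈ Set.Ioo (0 : ℝ) 1) (hm : 1 ≤ m)
    (hp : (2 * m + 1 - Real.sqrt (4 * (m - 1) * (m + 2) + 1)) / (4 * (2 * m - 1)) ≤ p)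
    (hp1 : p < 1) :
    0 ≤ (1 - p) * (1 - c ^ (2 * m - 1)) * u ^ 2 + 2 * c * (1 - c ^ (2 * m - 2)) * u
        + 2 * p * c * (1 - c ^ (2 * m - 1)) + c ^ 2 * (1 - c ^ (2 * m - 3)) :=
  delta2_nonneg_general u c p m hu hc hm hp
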